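/- For every n and all integers 1 ≤ k₁ < k₂ ≤ n, the signed cycles C_{n,k₁} and C_{n,k₂} are uncorrelated: E[C_{n,k₁}·C_{n,k₂}] = E[C_{n,k₁}]·E[C_{n,k₂}]. -/

import Mathlib

open MeasureTheory ProbabilityTheory Filter Finset Topology BoundedContinuousFunction

noncomputable section

/-- Index set for the upper-triangular (including diagonal) entries of an `n × n` matrix. -/
abbrev UpperIdx (n : ℕ) := {p : Fin n × Fin n // p.1 ≤ p.2}

/-- The law `P_n` of the i.i.d. standard Gaussian upper-triangular entries. -/
def gaussMeasure (n : ℕ) : Measure (UpperIdx n → ℝ) :=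
  Measure.pi fun _ => gaussianReal 0 1

/-- The entry `A i j` of the random symmetric matrix. -/
def entry {n : ℕ} (ω : UpperIdx n → ℝ) (i j : Fin n) : ℝ :=
  if h : i ≤ j then ω ⟨(i, j), h⟩ else ω ⟨(j, i), (le_total i j).resolve_left h⟩

/-- Cyclic successor on `Fin k`. -/
def cnext {k : ℕ} (j : Fin k) : Fin k :=
  ⟨(j.val + 1) % k, Nat.mod_lt _ j.pos⟩

/-- The signed cycle count `C_{n,k}`. -/
def signedCycle (n k : ℕ) (ω : UpperIdx n → ℝ) : ℝ :=
  (n : ℝ) ^ (-(k : ℝ) / 2) *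
    ∑ i ∈ Finset.univ.filter (fun i : Fin k → Fin n => Function.Injective i),
      ∏ j : Fin k, entry ω (i j) (i (cnext j))

/-! ### Auxiliary definitions and lemmas -/

/-- The upper-triangular index associated to an unordered pair. -/
def mkUpper {n : ℕ} (i j : Fin n) : UpperIdx n :=
  if h : i ≤ j then ⟨(i, j), h⟩ else ⟨(j, i), le_of_not_ge h⟩

lemma entry_eq_mkUpper {n : ℕ} (ω : UpperIdx n → ℝ) (i j : Fin n) :
    entry ω i j = ω (mkUpper i j) := by
  unfold entry mkUpper; split_ifs <;> rfl

lemma mkUpper_eq {n : ℕ} {a b c d : Fin n} (h : mkUpper a b = mkUpper c d) :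
    (a = c ∧ b = d) ∨ (a = d ∧ b = c) := by
  unfold mkUpper at h
  split_ifs at h <;>
    simp only [Subtype.mk.injEq, Prod.mk.injEq] at h <;> tauto

lemma mkUpper_comm {n : ℕ} (a b : Fin n) : mkUpper a b = mkUpper b a := by
  unfold mkUpper
  split_ifs with h h' h'
  · simp [le_antisymm h h']
  · rfl
  · rfl
  · exact absurd (le_of_not_ge h) h'

lemma cnext_val {k : ℕ} (j : Fin k) :
    (cnext j).1 = if j.1 + 1 = k then 0 else j.1 + 1 := by
  unfold cnext
  by_cases h : j.1 + 1 = k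
  · simp [h, Nat.mod_self]
  · have : j.1 + 1 < k := by have := j.2; omega
    simp [h, Nat.mod_eq_of_lt this]

lemma cnext_ne {k : ℕ} (hk : 2 ≤ k) (j : Fin k) : cnext j ≠ j := by
  intro h
  have h1 := congrArg Fin.val h
  rw [cnext_val] at h1
  have h2 := j.2
  split_ifs at h1 <;> omega

/-- The edge map of a cycle. -/
def edgeMap {n k : ℕ} (i : Fin k → Fin n) (j : Fin k) : UpperIdx n :=
  mkUpper (i j) (i (cnext j))

/-- Multiplicity of an upper index among the edges of a cycle. -/
def ecount {n k : ℕ} (E : Fin k → UpperIdx n) (u : UpperIdx n) : ℕ :=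
  (univ.filter fun j => E j = u).card

lemma edgeMap_injective {n k : ℕ} (hk : k = 1 ∨ 3 ≤ k) {i : Fin k → Fin n}
    (hi : Function.Injective i) : Function.Injective (edgeMap i) := by
  rcases hk with rfl | hk
  · exact Function.injective_of_subsingleton _
  intro a b h
  rcases mkUpper_eq h with ⟨h1, h2⟩ | ⟨h1, h2⟩
  · exact hi h1
  · exfalso
    have ha : a = cnext b := hi h1
    have hb : cnext a = b := hi h2
    have ha' := congrArg Fin.val ha
    have hb' := congrArg Fin.val hb
    rw [cnext_val] at ha' hb'
    have h2a := a.2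
    have h2b := b.2
    split_ifs at ha' hb' <;> omega

lemma ecount_of_injective {n k : ℕ} {E : Fin k → UpperIdx n}
    (hE : Function.Injective E) (j : Fin k) : ecount E (E j) = 1 := by
  unfold ecount
  rw [show (univ.filter fun j' => E j' = E j) = {j} by
    ext j'; simp [hE.eq_iff]]
  simp

lemma ecount_le_one {n k : ℕ} {E : Fin k → UpperIdx n}
    (hE : Function.Injective E) (u : UpperIdx n) : ecount E u ≤ 1 := by
  apply Finset.card_le_one.mpr
  intro a ha b hb
  simp only [mem_filter] at ha hb
  exact hE (ha.2.trans hb.2.symm)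

lemma sum_ecount {n k : ℕ} (E : Fin k → UpperIdx n) :
    ∑ u : UpperIdx n, ecount E u = k := by
  unfold ecount
  rw [← Finset.card_eq_sum_card_fiberwise (fun j _ => Finset.mem_univ (E j))]
  simp

/-- The key combinatorial lemma: two injective cycles of different lengths always
produce an edge of odd total multiplicity. -/
lemma exists_odd_count {n k₁ k₂ : ℕ} (hk1 : 1 ≤ k₁) (h12 : k₁ < k₂)
    {i1 : Fin k₁ → Fin n} {i2 : Fin k₂ → Fin n}
    (h1 : Function.Injective i1) (h2 : Function.Injective i2) :
    ∃ u : UpperIdx n, Odd (ecount (edgeMap i1) u + ecount (edgeMap i2) u) := by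
  rcases eq_or_lt_of_le hk1 with h1' | h1'
  · -- k₁ = 1
    obtain rfl : k₁ = 1 := h1'.symm
    refine ⟨edgeMap i1 0, ?_⟩
    have e1 : ecount (edgeMap i1) (edgeMap i1 0) = 1 :=
      ecount_of_injective (edgeMap_injective (Or.inl rfl) h1) 0
    have hself : edgeMap i1 0 = mkUpper (i1 0) (i1 0) := by
      unfold edgeMap
      congr 2
    have e2 : ecount (edgeMap i2) (edgeMap i1 0) = 0 := by
      unfold ecount
      rw [Finset.card_eq_zero, Finset.filter_eq_empty_iff]
      intro j _ hj
      rw [hself] at hj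
      rcases mkUpper_eq hj with ⟨ha, hb⟩ | ⟨ha, hb⟩ <;>
        exact cnext_ne h12 j (h2 (hb.trans ha.symm))
    rw [e1, e2]
    exact odd_one
  · rcases eq_or_lt_of_le (show 2 ≤ k₁ from h1') with h2' | h2'
    · -- k₁ = 2
      obtain rfl : k₁ = 2 := h2'.symm
      have hk2 : 3 ≤ k₂ := h12
      have h2inj := edgeMap_injective (Or.inr hk2) h2
      have h0 : (0 : ℕ) < k₂ := by omega
      refine ⟨edgeMap i2 ⟨0, h0⟩, ?_⟩
      have e2 : ecount (edgeMap i2) (edgeMap i2 ⟨0, h0⟩) = 1 :=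
        ecount_of_injective h2inj _
      have hE10 : edgeMap i1 1 = edgeMap i1 0 := by
        unfold edgeMap
        have c1 : cnext (1 : Fin 2) = 0 := by decide
        have c0 : cnext (0 : Fin 2) = 1 := by decide
        rw [c1, c0]
        exact mkUpper_comm _ _
      have e1 : Even (ecount (edgeMap i1) (edgeMap i2 ⟨0, h0⟩)) := by
        unfold ecount
        by_cases h : edgeMap i1 0 = edgeMap i2 ⟨0, h0⟩
        · rw [show (univ.filter fun j => edgeMap i1 j = edgeMap i2 ⟨0, h0⟩) = univ by
            ext j
            fin_cases j <;> simp [h, hE10]]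
          simp
        · rw [show (univ.filter fun j => edgeMap i1 j = edgeMap i2 ⟨0, h0⟩) = ∅ by
            rw [Finset.filter_eq_empty_iff]
            intro j _
            fin_cases j <;> simpa [hE10] using h]
          simp
      obtain ⟨r, hr⟩ := e1
      rw [e2, hr, Nat.odd_iff]
      omega
    · -- 3 ≤ k₁
      have hk3 : 3 ≤ k₁ := h2'
      have h1inj := edgeMap_injective (Or.inr hk3) h1
      have h2inj := edgeMap_injective (Or.inr (by omega : 3 ≤ k₂)) h2
      by_contra hcon
      push_neg at hcon
      have heq : ∀ u, ecount (edgeMap i1) u = ecount (edgeMap i2) u := by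
        intro u
        have hev : Even (ecount (edgeMap i1) u + ecount (edgeMap i2) u) :=
          Nat.not_odd_iff_even.mp (hcon u)
        obtain ⟨r, hr⟩ := hev
        have l1 := ecount_le_one h1inj u
        have l2 := ecount_le_one h2inj u
        omega
      have : k₁ = k₂ := by
        rw [← sum_ecount (edgeMap i1), ← sum_ecount (edgeMap i2)]
        exact Finset.sum_congr rfl fun u _ => heq u
      omega

/-! ### Gaussian moment lemmas -/

lemma integrable_pow_gauss (m : ℕ) :
    Integrable (fun x : ℝ => x ^ m) (gaussianReal 0 1) := by
  rw [gaussianReal_of_var_ne_zero 0 one_ne_zero]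
  rw [integrable_withDensity_iff (measurable_gaussianPDF 0 1)
    (ae_of_all _ fun x => ENNReal.ofReal_lt_top)]
  have base : Integrable (fun x : ℝ => x ^ m * Real.exp (-(1/2 : ℝ) * x ^ 2)) := by
    have h := integrable_rpow_mul_exp_neg_mul_sq (b := (1/2 : ℝ)) (by norm_num)
      (s := (m : ℝ)) (lt_of_lt_of_le (by norm_num) (Nat.cast_nonneg m))
    simpa [Real.rpow_natCast] using h
  have h2 := base.const_mul ((Real.sqrt (2 * Real.pi * (1 : NNReal))) ⁻¹)
  apply h2.congr
  filter_upwards with x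
  rw [gaussianPDF, ENNReal.toReal_ofReal (gaussianPDFReal_nonneg 0 1 x), gaussianPDFReal]
  push_cast
  ring_nf

lemma gauss_map_neg : (gaussianReal 0 1).map (fun x : ℝ => -x) = gaussianReal 0 1 := by
  have h := gaussianReal_map_const_mul (μ := 0) (v := 1) (-1)
  have : (fun x : ℝ => -x) = ((-1 : ℝ) * ·) := by funext x; ring
  rw [this, h]
  norm_num

lemma gauss_odd_moment {m : ℕ} (hm : Odd m) :
    ∫ x, x ^ m ∂(gaussianReal 0 1) = 0 := by
  have key : ∫ x, x ^ m ∂(gaussianReal 0 1) = ∫ x, (-x) ^ m ∂(gaussianReal 0 1) := by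
    conv_lhs => rw [← gauss_map_neg]
    rw [integral_map (by fun_prop) (by fun_prop)]
  simp only [hm.neg_pow, integral_neg] at key
  linarith

/-! ### Product integrals over the Gaussian product measure -/

lemma integral_pi_prod {ι : Type} [Fintype ι] (f : ι → ℝ → ℝ) :
    ∫ x : ι → ℝ, ∏ i, f i (x i) ∂(Measure.pi fun _ : ι => gaussianReal 0 1) =
      ∏ i, ∫ x, f i x ∂(gaussianReal 0 1) := by
  letI : MeasureSpace ℝ := ⟨gaussianReal 0 1⟩
  haveI : SigmaFinite (volume : Measure ℝ) :=
    inferInstanceAs (SigmaFinite (gaussianReal 0 1))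
  exact MeasureTheory.integral_fintype_prod_eq_prod (fun i => f i)

lemma integrable_pi_prod {ι : Type} [Fintype ι] (f : ι → ℝ → ℝ)
    (hf : ∀ i, Integrable (f i) (gaussianReal 0 1)) :
    Integrable (fun x : ι → ℝ => ∏ i, f i (x i))
      (Measure.pi fun _ : ι => gaussianReal 0 1) := by
  letI : MeasureSpace ℝ := ⟨gaussianReal 0 1⟩
  haveI : SigmaFinite (volume : Measure ℝ) :=
    inferInstanceAs (SigmaFinite (gaussianReal 0 1))
  exact MeasureTheory.Integrable.fintype_prod hf

/-- Product of entries, rewritten as a product of powers over all upper indices. -/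
lemma prod_eq_prod_pow {n k : ℕ} (E : Fin k → UpperIdx n) (ω : UpperIdx n → ℝ) :
    ∏ j, ω (E j) = ∏ u : UpperIdx n, ω u ^ ecount E u := by
  rw [← Finset.prod_fiberwise_of_maps_to (fun j _ => Finset.mem_univ (E j))
    (fun j => ω (E j))]
  refine Finset.prod_congr rfl fun u _ => ?_
  rw [Finset.prod_congr rfl (fun j hj => congrArg ω (Finset.mem_filter.mp hj).2),
    Finset.prod_const]
  rfl

lemma pair_prod_eq {n k₁ k₂ : ℕ} (E1 : Fin k₁ → UpperIdx n) (E2 : Fin k₂ → UpperIdx n)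
    (ω : UpperIdx n → ℝ) :
    (∏ j, ω (E1 j)) * ∏ j, ω (E2 j) =
      ∏ u : UpperIdx n, ω u ^ (ecount E1 u + ecount E2 u) := by
  rw [prod_eq_prod_pow E1, prod_eq_prod_pow E2, ← Finset.prod_mul_distrib]
  exact Finset.prod_congr rfl fun u _ => (pow_add _ _ _).symm

lemma integrable_prod_pow {n : ℕ} (m : UpperIdx n → ℕ) :
    Integrable (fun ω : UpperIdx n → ℝ => ∏ u, ω u ^ m u) (gaussMeasure n) :=
  integrable_pi_prod (fun u x => x ^ m u) (fun u => integrable_pow_gauss (m u))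

lemma integral_prod_pow {n : ℕ} (m : UpperIdx n → ℕ) :
    ∫ ω, ∏ u, ω u ^ m u ∂(gaussMeasure n) = ∏ u, ∫ x, x ^ m u ∂(gaussianReal 0 1) :=
  integral_pi_prod (fun u x => x ^ m u)

lemma integral_prod_pow_eq_zero {n : ℕ} {m : UpperIdx n → ℕ}
    (hm : ∃ u, Odd (m u)) :
    ∫ ω, ∏ u, ω u ^ m u ∂(gaussMeasure n) = 0 := by
  obtain ⟨u, hu⟩ := hm
  rw [integral_prod_pow]
  exact Finset.prod_eq_zero (Finset.mem_univ u) (gauss_odd_moment hu)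

/-- Expectation of a single cycle term of length `k ≠ 2` vanishes. -/
lemma integral_cycle_term {n k : ℕ} (hk : k = 1 ∨ 3 ≤ k) {i : Fin k → Fin n}
    (hi : Function.Injective i) :
    ∫ ω, ∏ j, ω (edgeMap i j) ∂(gaussMeasure n) = 0 := by
  simp_rw [prod_eq_prod_pow (edgeMap i)]
  apply integral_prod_pow_eq_zero
  have hk1 : 0 < k := by rcases hk with rfl | hk <;> omega
  refine ⟨edgeMap i ⟨0, hk1⟩, ?_⟩
  rw [ecount_of_injective (edgeMap_injective hk hi)]
  exact odd_one

/-- Expectation of a pair of cycle terms of different lengths vanishes. -/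
lemma integral_pair_term {n k₁ k₂ : ℕ} (hk1 : 1 ≤ k₁) (h12 : k₁ < k₂)
    {i1 : Fin k₁ → Fin n} {i2 : Fin k₂ → Fin n}
    (h1 : Function.Injective i1) (h2 : Function.Injective i2) :
    ∫ ω, (∏ j, ω (edgeMap i1 j)) * ∏ j, ω (edgeMap i2 j) ∂(gaussMeasure n) = 0 := by
  simp_rw [pair_prod_eq (edgeMap i1) (edgeMap i2)]
  exact integral_prod_pow_eq_zero (exists_odd_count hk1 h12 h1 h2)

/-- Expectation of a signed cycle of length `k ≠ 2` vanishes. -/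
lemma integral_signedCycle {n k : ℕ} (hk : k = 1 ∨ 3 ≤ k) :
    ∫ ω, signedCycle n k ω ∂(gaussMeasure n) = 0 := by
  have hpt : ∀ ω : UpperIdx n → ℝ, signedCycle n k ω =
      (n : ℝ) ^ (-(k : ℝ) / 2) *
        ∑ i ∈ Finset.univ.filter (fun i : Fin k → Fin n => Function.Injective i),
          ∏ j : Fin k, ω (edgeMap i j) := by
    intro ω
    unfold signedCycle
    congr 1
    exact Finset.sum_congr rfl fun i _ =>
      Finset.prod_congr rfl fun j _ => entry_eq_mkUpper ω _ _
  simp_rw [hpt]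
  rw [integral_const_mul, integral_finset_sum]
  · rw [Finset.sum_congr rfl fun i hi =>
      integral_cycle_term hk (Finset.mem_filter.mp hi).2]
    simp
  · intro i _
    have : (fun ω : UpperIdx n → ℝ => ∏ j, ω (edgeMap i j)) =
        fun ω => ∏ u, ω u ^ ecount (edgeMap i) u :=
      funext fun ω => prod_eq_prod_pow _ ω
    rw [this]
    exact integrable_prod_pow _

/-- **Signed cycles of different lengths are uncorrelated:** for `1 ≤ k₁ < k₂ ≤ n`,
`E[C_{n,k₁} C_{n,k₂}] = E[C_{n,k₁}] E[C_{n,k₂}]`. -/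
theorem signedCycle_uncorrelated (n k₁ k₂ : ℕ) (hk1 : 1 ≤ k₁) (h12 : k₁ < k₂)
    (hk2n : k₂ ≤ n) :
    ∫ ω, signedCycle n k₁ ω * signedCycle n k₂ ω ∂gaussMeasure n =
      (∫ ω, signedCycle n k₁ ω ∂gaussMeasure n) *
        ∫ ω, signedCycle n k₂ ω ∂gaussMeasure n := by
  set S₁ := Finset.univ.filter (fun i : Fin k₁ → Fin n => Function.Injective i) with hS₁
  set S₂ := Finset.univ.filter (fun i : Fin k₂ → Fin n => Function.Injective i) with hS₂
  -- left-hand side is zero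
  have hLHS : ∫ ω, signedCycle n k₁ ω * signedCycle n k₂ ω ∂gaussMeasure n = 0 := by
    have hpt : ∀ ω : UpperIdx n → ℝ,
        signedCycle n k₁ ω * signedCycle n k₂ ω =
        ((n : ℝ) ^ (-(k₁ : ℝ) / 2) * (n : ℝ) ^ (-(k₂ : ℝ) / 2)) *
          ∑ p ∈ S₁ ×ˢ S₂,
            (∏ j, ω (edgeMap p.1 j)) * ∏ j, ω (edgeMap p.2 j) := by
      intro ω
      rw [Finset.sum_product]
      unfold signedCycle
      simp_rw [entry_eq_mkUpper]
      rw [← Finset.sum_mul_sum]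
      unfold edgeMap
      rw [← hS₁, ← hS₂]
      ring
    simp_rw [hpt]
    rw [integral_const_mul, integral_finset_sum]
    · rw [Finset.sum_congr rfl fun p hp => by
        have hp' := Finset.mem_product.mp hp
        exact integral_pair_term hk1 h12
          (Finset.mem_filter.mp hp'.1).2 (Finset.mem_filter.mp hp'.2).2]
      simp
    · intro p _
      have : (fun ω : UpperIdx n → ℝ =>
          (∏ j, ω (edgeMap p.1 j)) * ∏ j, ω (edgeMap p.2 j)) =
          fun ω => ∏ u, ω u ^ (ecount (edgeMap p.1) u + ecount (edgeMap p.2) u) :=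
        funext fun ω => pair_prod_eq _ _ ω
      rw [this]
      exact integrable_prod_pow _
  rw [hLHS]
  -- right-hand side is zero
  by_cases hk12 : k₁ = 2
  · have : ∫ ω, signedCycle n k₂ ω ∂gaussMeasure n = 0 :=
      integral_signedCycle (Or.inr (by omega))
    rw [this, mul_zero]
  · have : ∫ ω, signedCycle n k₁ ω ∂gaussMeasure n = 0 :=
      integral_signedCycle (by omega)
    rw [this, zero_mul]

end
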